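/- arXiv:1608.06533 — 4 statements merged into one kernel-verified Lean document; each statement's English description precedes it below -/
import Mathlib

section
/- For every 2-colouring of the edges of a connected graph G, if every colouring yields a red cycle (of any length) or a blue path on n vertices, then G has at least 2(n−1) edges. Consequently, for any positive real c, the size-Ramsey number R̂(C_{≤cn}, P_n) is at least 2(n−1). -/
open SimpleGraph Finset Real

/-- There is a blue path on `n` vertices (all edges coloured `false` = blue). -/
def hasBluePath {V : Type*} (G : SimpleGraph V) (red : Sym2 V → Bool) (n : ℕ) : Prop :=
  ∃ (u v : V) (p : G.Walk u v), p.IsPath ∧ p.length + 1 = n ∧ ∀ e ∈ p.edges, red e = false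

/-- There is a red cycle of length at most `L`. -/
def hasRedCycleLe {V : Type*} (G : SimpleGraph V) (red : Sym2 V → Bool) (L : ℝ) : Prop :=
  ∃ (u : V) (p : G.Walk u u), p.IsCycle ∧ (p.length : ℝ) ≤ L ∧ ∀ e ∈ p.edges, red e = true

/-- There is a red cycle (of any length). -/
def hasRedCycle {V : Type*} (G : SimpleGraph V) (red : Sym2 V → Bool) : Prop :=
  ∃ (u : V) (p : G.Walk u u), p.IsCycle ∧ ∀ e ∈ p.edges, red e = true

/-!
Colouring every edge blue yields a blue path `P` on `n` vertices. Colouring exactly the edges of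
`P` red then leaves no red cycle: rotated to start at the first vertex of `P` it visits, a cycle
inside `P` would have two distinct edges at that vertex, while `P` has only one edge there. So this
colouring has a blue path on `n` vertices, edge-disjoint from `P`, and `G` has at least `2 (n - 1)`
edges.
-/

namespace SimpleGraph.Walk

variable {V : Type*} {G : SimpleGraph V}

lemma IsCycle.not_edges_subset_of_isPath_of_mem_support {x u v : V} {q : G.Walk x x}
    {p : G.Walk u v} (hq : q.IsCycle) (hp : p.IsPath) (hu : u ∈ q.support) :
    ¬ q.edges ⊆ p.edges := by
  classical
  intro hsub
  set c := q.rotate u hu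
  have hc : c.IsCycle := hq.rotate hu
  have hcp : c.edges ⊆ p.edges := fun e he => hsub ((q.rotate_edges u hu).mem_iff.mp he)
  have hsnd := hp.eq_snd_of_mem_edges (hcp (c.mk_start_snd_mem_edges hc.not_nil))
  have hpen := hp.eq_snd_of_mem_edges
    (hcp (Sym2.eq_swap ▸ c.mk_penultimate_end_mem_edges hc.not_nil))
  exact hc.snd_ne_penultimate (hsnd.trans hpen.symm)

lemma IsCycle.not_edges_subset_of_isPath {x : V} {q : G.Walk x x} (hq : q.IsCycle) :
    ∀ {u v : V} {p : G.Walk u v}, p.IsPath → ¬ q.edges ⊆ p.edges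
  | _, _, .nil, _, hsub => hq.not_nil (edges_eq_nil.mp (List.subset_nil.mp hsub))
  | u, _, .cons (v := w) h p, hp, hsub => by
    by_cases huv : s(u, w) ∈ q.edges
    · exact hq.not_edges_subset_of_isPath_of_mem_support hp
        (q.fst_mem_support_of_mem_edges huv) hsub
    · refine hq.not_edges_subset_of_isPath hp.of_cons fun e he => ?_
      rcases List.mem_cons.mp (hsub he) with rfl | he'
      · exact absurd he huv
      · exact he'

lemma length_add_length_le_card_edgeFinset [Fintype G.edgeSet] {a b c d : V} {p : G.Walk a b}
    {q : G.Walk c d} (hp : p.IsTrail) (hq : q.IsTrail) (hpq : p.edges.Disjoint q.edges) :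
    p.length + q.length ≤ G.edgeFinset.card := by
  classical
  have hnodup : (p.edges ++ q.edges).Nodup := List.nodup_append.mpr
    ⟨hp.edges_nodup, hq.edges_nodup, fun e hep e' heq h => hpq hep (h ▸ heq)⟩
  calc p.length + q.length = (p.edges ++ q.edges).toFinset.card := by
        rw [List.toFinset_card_of_nodup hnodup, List.length_append, length_edges, length_edges]
    _ ≤ G.edgeFinset.card := Finset.card_le_card fun e he =>
        mem_edgeFinset.mpr <| (List.mem_append.mp (List.mem_toFinset.mp he)).elim
          (p.edges_subset_edgeSet ·) (q.edges_subset_edgeSet ·)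

end SimpleGraph.Walk

lemma not_hasRedCycle_const_false {V : Type*} {G : SimpleGraph V} :
    ¬ hasRedCycle G fun _ => false := by
  rintro ⟨_, q, hq, hred⟩
  simpa using hred _ (q.mk_start_snd_mem_edges hq.not_nil)

lemma not_hasRedCycle_of_red_subset_edges {V : Type*} {G : SimpleGraph V} {red : Sym2 V → Bool}
    {u v : V} {p : G.Walk u v} (hp : p.IsPath) (hred : ∀ e, red e = true → e ∈ p.edges) :
    ¬ hasRedCycle G red := by
  rintro ⟨_, q, hq, hcol⟩
  exact hq.not_edges_subset_of_isPath hp fun e he => hred e (hcol e he)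

lemma hasRedCycleLe.hasRedCycle {V : Type*} {G : SimpleGraph V} {red : Sym2 V → Bool} {L : ℝ}
    (h : hasRedCycleLe G red L) : hasRedCycle G red :=
  let ⟨u, p, hp, _, hred⟩ := h
  ⟨u, p, hp, hred⟩

theorem two_mul_pred_le_card_edgeFinset_of_hasRedCycle_or_hasBluePath {V : Type*}
    {G : SimpleGraph V} [Fintype G.edgeSet] (n : ℕ)
    (H : ∀ red : Sym2 V → Bool, hasRedCycle G red ∨ hasBluePath G red n) :
    2 * (n - 1) ≤ G.edgeFinset.card := by
  classical
  obtain ⟨_, _, p, hp, hpn, -⟩ := (H fun _ => false).resolve_left not_hasRedCycle_const_false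
  obtain ⟨_, _, q, hq, hqn, hblue⟩ := (H fun e => decide (e ∈ p.edges)).resolve_left
    (not_hasRedCycle_of_red_subset_edges hp fun e => by simp)
  have hpq : p.edges.Disjoint q.edges := fun e hep heq => by simpa [hep] using hblue e heq
  have := Walk.length_add_length_le_card_edgeFinset hp.isTrail hq.isTrail hpq
  omega

theorem stmt2_general (c : ℝ) (n : ℕ) :
    (∀ (V : Type) [Fintype V] [DecidableEq V] (G : SimpleGraph V) [DecidableRel G.Adj],
      G.Connected →
      (∀ red : Sym2 V → Bool, hasRedCycle G red ∨ hasBluePath G red n) →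
      2 * (n - 1) ≤ G.edgeFinset.card) ∧
    (∀ (V : Type) [Fintype V] [DecidableEq V] (G : SimpleGraph V) [DecidableRel G.Adj],
      (∀ red : Sym2 V → Bool, hasRedCycleLe G red (c * n) ∨ hasBluePath G red n) →
      2 * (n - 1) ≤ G.edgeFinset.card) :=
  ⟨fun _ _ _ _ _ _ H => two_mul_pred_le_card_edgeFinset_of_hasRedCycle_or_hasBluePath n H,
    fun _ _ _ _ _ H => two_mul_pred_le_card_edgeFinset_of_hasRedCycle_or_hasBluePath n
      fun red => (H red).imp_left hasRedCycleLe.hasRedCycle⟩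

theorem stmt2 (c : ℝ) (hc : 0 < c) (n : ℕ) :
    (∀ (V : Type) [Fintype V] [DecidableEq V] (G : SimpleGraph V) [DecidableRel G.Adj],
      G.Connected →
      (∀ red : Sym2 V → Bool, hasRedCycle G red ∨ hasBluePath G red n) →
      2 * (n - 1) ≤ G.edgeFinset.card) ∧
    (∀ (V : Type) [Fintype V] [DecidableEq V] (G : SimpleGraph V) [DecidableRel G.Adj],
      (∀ red : Sym2 V → Bool, hasRedCycleLe G red (c * n) ∨ hasBluePath G red n) →
      2 * (n - 1) ≤ G.edgeFinset.card) :=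
  stmt2_general c n
end

section
/- Let G be a graph with no path on n vertices (as a subgraph), and suppose G has at least cn + n vertices for a positive real c with cn an even integer. Then there exist disjoint vertex sets S and T with |S| = |T| = cn/2 such that there are no edges of G between S and T. -/
/-!
Run depth-first search: it keeps the vertices partitioned into the current path `P`, the
unexplored vertices and the finished set `T`, with no edge between `T` and the unexplored ones.
Every step either extends `P` or moves its active end into `T`, so `T` grows one vertex at a
time and we may stop when `|T| = k := m / 2`. As `G` has no path on `n` vertices, `|P| < n`,
so at least `|V| - (n - 1) - k` vertices are unexplored, which is at least `k` once
`2k + n ≤ |V| + 1`.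
-/

open SimpleGraph Finset

/-- The number of edges between two (disjoint) vertex sets. -/
def edgesBetween {V : Type*} [DecidableEq V] (G : SimpleGraph V) [DecidableRel G.Adj]
    (S T : Finset V) : ℕ :=
  ((S ×ˢ T).filter fun p => G.Adj p.1 p.2).card

theorem edgesBetween_eq_zero_iff {V : Type*} [DecidableEq V] (G : SimpleGraph V)
    [DecidableRel G.Adj] (S T : Finset V) :
    edgesBetween G S T = 0 ↔ ∀ s ∈ S, ∀ t ∈ T, ¬ G.Adj s t := by
  simp only [edgesBetween, card_eq_zero, filter_eq_empty_iff, mem_product, Prod.forall, and_imp]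
  exact ⟨fun h s hs t ht => h s t hs ht, fun h s t hs ht => h s hs t ht⟩

namespace SimpleGraph

variable {V : Type*} {G : SimpleGraph V}

theorem length_lt_of_isChain_of_nodup {n : ℕ} (hn : 1 ≤ n)
    (hnopath : ¬ ∃ (u v : V) (p : G.Walk u v), p.IsPath ∧ p.length + 1 = n)
    {l : List V} (hchain : l.IsChain G.Adj) (hnodup : l.Nodup) : l.length < n := by
  by_contra! hlen
  have htake : (l.take n).length = n := by simp [hlen]
  have hne : l.take n ≠ [] := by
    rintro h
    simp [h] at htake
    omega
  let p := Walk.ofSupport (l.take n) hne (hchain.take n)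
  refine hnopath ⟨_, _, p, ?_, ?_⟩
  · rw [Walk.isPath_def, Walk.support_ofSupport]
    exact hnodup.sublist (l.take_sublist n)
  · rw [Walk.length_ofSupport, htake]
    omega

/-- A snapshot of depth-first search: the current path `P`, listed from its active end, and the
set `T` of finished vertices. The vertices outside `P` and `T` are the unexplored ones. -/
structure IsDFSState (G : SimpleGraph V) (P : List V) (T : Finset V) : Prop where
  isChain : P.IsChain G.Adj
  nodup : P.Nodup
  not_mem_finished : ∀ x ∈ P, x ∉ T
  not_adj_unexplored : ∀ t ∈ T, ∀ s, s ∉ P → s ∉ T → ¬ G.Adj t s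

theorem isDFSState_nil_empty : G.IsDFSState [] ∅ :=
  ⟨List.isChain_nil, List.nodup_nil, by simp, by simp⟩

variable [Fintype V] [DecidableEq V]

/-- Run depth-first search from a state until it finishes one more vertex: extend the path
while its active end has an unexplored neighbour, then retire that end. -/
theorem IsDFSState.exists_insert {P : List V} {T : Finset V} (h : G.IsDFSState P T)
    (hT : T ≠ univ) : ∃ (P' : List V) (a : V), a ∉ T ∧ G.IsDFSState P' (insert a T) := by
  match P, h with
  | [], h =>
    obtain ⟨a, haT⟩ : ∃ a, a ∉ T := by simpa [eq_univ_iff_forall] using hT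
    have h' : G.IsDFSState [a] T :=
      ⟨List.isChain_singleton a, List.nodup_singleton a, by simpa using haT,
        fun t ht s _ hsT => h.not_adj_unexplored t ht s List.not_mem_nil hsT⟩
    have : Fintype.card V - 1 < Fintype.card V - 0 := by
      have := Fintype.card_pos_iff.mpr ⟨a⟩
      omega
    exact h'.exists_insert hT
  | a :: rest, h =>
    by_cases hext : ∃ b, b ∉ a :: rest ∧ b ∉ T ∧ G.Adj a b
    · obtain ⟨b, hbP, hbT, hab⟩ := hext
      have h' : G.IsDFSState (b :: a :: rest) T := by
        refine ⟨List.isChain_cons_cons.mpr ⟨hab.symm, h.isChain⟩,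
          List.nodup_cons.mpr ⟨hbP, h.nodup⟩, ?_, ?_⟩
        · simpa [hbT] using h.not_mem_finished
        · exact fun t ht s hsP hsT =>
            h.not_adj_unexplored t ht s (fun hs => hsP (List.mem_cons_of_mem b hs)) hsT
      have : Fintype.card V - (rest.length + 2) < Fintype.card V - (rest.length + 1) := by
        have := h'.nodup.length_le_card
        simp only [List.length_cons] at this
        omega
      exact h'.exists_insert hT
    · push Not at hext
      have haT : a ∉ T := h.not_mem_finished a List.mem_cons_self
      refine ⟨rest, a, haT, List.isChain_cons.mp h.isChain |>.2, h.nodup.of_cons, ?_, ?_⟩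
      · intro x hx
        simp only [mem_insert, not_or]
        exact ⟨fun hxa => (List.nodup_cons.mp h.nodup).1 (hxa ▸ hx),
          h.not_mem_finished x (List.mem_cons_of_mem a hx)⟩
      · intro t ht s hsP hsT
        simp only [mem_insert, not_or] at ht hsT
        have hsP' : s ∉ a :: rest := by simp [hsT.1, hsP]
        rcases ht with rfl | ht
        · exact hext s hsP' hsT.2
        · exact h.not_adj_unexplored t ht s hsP' hsT.2
termination_by Fintype.card V - P.length

theorem exists_isDFSState_card_eq {k : ℕ} (hk : k ≤ Fintype.card V) :
    ∃ P T, G.IsDFSState P T ∧ T.card = k := by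
  induction k with
  | zero => exact ⟨[], ∅, isDFSState_nil_empty, rfl⟩
  | succ k ih =>
    obtain ⟨P, T, h, rfl⟩ := ih (by omega)
    have hT : T ≠ univ := by
      rintro rfl
      simp at hk
    obtain ⟨P', a, haT, h'⟩ := h.exists_insert hT
    exact ⟨P', _, h', card_insert_of_notMem haT⟩

theorem exists_disjoint_card_eq_not_adj_of_no_path {n k : ℕ} (hn : 1 ≤ n)
    (hnopath : ¬ ∃ (u v : V) (p : G.Walk u v), p.IsPath ∧ p.length + 1 = n)
    (hk : 2 * k + n ≤ Fintype.card V + 1) :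
    ∃ S T : Finset V, Disjoint S T ∧ S.card = k ∧ T.card = k ∧
      ∀ s ∈ S, ∀ t ∈ T, ¬ G.Adj s t := by
  obtain ⟨P, T, h, hTk⟩ := exists_isDFSState_card_eq (G := G) (k := k) (by omega)
  have hP := length_lt_of_isChain_of_nodup hn hnopath h.isChain h.nodup
  set U := univ \ (P.toFinset ∪ T)
  have hU : k ≤ U.card := by
    have : (P.toFinset ∪ T).card ≤ P.length + k :=
      (card_union_le _ _).trans (by rw [hTk]; have := P.toFinset_card_le; omega)
    rw [card_sdiff_of_subset (subset_univ _), card_univ]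
    omega
  obtain ⟨S, hSU, hSk⟩ := exists_subset_card_eq hU
  refine ⟨S, T, ?_, hSk, hTk, fun s hs t ht hst => ?_⟩
  · exact disjoint_of_subset_left hSU (sdiff_disjoint.mono_right subset_union_right)
  · have hsU := hSU hs
    simp only [U, mem_sdiff, mem_union, List.mem_toFinset, not_or] at hsU
    exact h.not_adj_unexplored t ht s hsU.2.1 hsU.2.2 hst.symm

end SimpleGraph

theorem stmt8_general (c : ℝ) (n m : ℕ) (hm : (m : ℝ) = c * n)
    (V : Type*) [Fintype V] [DecidableEq V] (G : SimpleGraph V) [DecidableRel G.Adj]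
    (hcard : m + n ≤ Fintype.card V)
    (hnopath : ¬ ∃ (u v : V) (p : G.Walk u v), p.IsPath ∧ p.length + 1 = n) :
    ∃ S T : Finset V, Disjoint S T ∧ S.card = m / 2 ∧ T.card = m / 2 ∧
      edgesBetween G S T = 0 := by
  simp_rw [edgesBetween_eq_zero_iff]
  rcases Nat.eq_zero_or_pos n with rfl | hn
  · obtain rfl : m = 0 := by simpa using hm
    exact ⟨∅, ∅, by simp⟩
  · exact exists_disjoint_card_eq_not_adj_of_no_path hn hnopath (by omega)

theorem stmt8 (c : ℝ) (hc : 0 < c) (n m : ℕ) (hm : (m : ℝ) = c * n) (hme : Even m)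
    (V : Type*) [Fintype V] [DecidableEq V] (G : SimpleGraph V) [DecidableRel G.Adj]
    (hcard : m + n ≤ Fintype.card V)
    (hnopath : ¬ ∃ (u v : V) (p : G.Walk u v), p.IsPath ∧ p.length + 1 = n) :
    ∃ S T : Finset V, Disjoint S T ∧ S.card = m / 2 ∧ T.card = m / 2 ∧
      edgesBetween G S T = 0 :=
  stmt8_general c n m hm V G hcard hnopath
end

section
/- For every c ∈ (0,1] with d̂ = 40·log(e/c)/c, one has c²·d̂/4 = 10·c·log(e/c) > (c+1)·log(c+1) + c·log(d̂/2) + c; consequently the unique d > 4/c solving (c+1)log(c+1) + c·log(d/2) − c²d/4 + c = 0 satisfies d < 40·log(e/c)/c. -/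
open Real

theorem stmt10 (c : ℝ) (hc0 : 0 < c) (hc1 : c ≤ 1)
    (dhat : ℝ) (hd : dhat = 40 * Real.log (Real.exp 1 / c) / c) :
    (c ^ 2 * dhat / 4 = 10 * c * Real.log (Real.exp 1 / c) ∧
      (c + 1) * Real.log (c + 1) + c * Real.log (dhat / 2) + c
        < 10 * c * Real.log (Real.exp 1 / c)) ∧
    ∀ d : ℝ, 4 / c < d →
      (c + 1) * Real.log (c + 1) + c * Real.log (d / 2) - c ^ 2 * d / 4 + c = 0 →
      d < dhat := by
  set L := Real.log (Real.exp 1 / c) with hL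
  have hlogc : Real.log c = 1 - L := by
    rw [hL, Real.log_div (Real.exp_ne_zero 1) hc0.ne', Real.log_exp]; ring
  have hL1 : 1 ≤ L := by
    have : Real.log c ≤ 0 := Real.log_nonpos hc0.le hc1
    linarith
  have hL0 : 0 < L := by linarith
  have hdpos : 0 < dhat := by
    rw [hd]; apply div_pos (by linarith) hc0
  have hEq : c ^ 2 * dhat / 4 = 10 * c * L := by
    rw [hd]; field_simp; ring
  have hlogdhat : Real.log (dhat / 2) = Real.log 20 + Real.log L + (L - 1) := by
    rw [hd]
    have h1 : 40 * L / c / 2 = 20 * L / c := by ring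
    rw [h1, Real.log_div (by positivity) hc0.ne',
      Real.log_mul (by norm_num) hL0.ne', hlogc]
    ring
  have h20 : Real.log 20 < 3 := by
    have he : Real.exp 1 > 2.7182818283 := Real.exp_one_gt_d9
    have h3 : (20 : ℝ) < Real.exp 3 := by
      have : Real.exp 3 = (Real.exp 1) ^ 3 := by
        rw [← Real.exp_nat_mul]; norm_num
      have hp : (2.7182818283:ℝ) ^ 3 ≤ Real.exp 1 ^ 3 :=
        pow_le_pow_left₀ (by norm_num) he.le 3
      have hn : (20:ℝ) < 2.7182818283 ^ 3 := by norm_num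
      rw [this]; linarith
    calc Real.log 20 < Real.log (Real.exp 3) := Real.log_lt_log (by norm_num) h3
      _ = 3 := Real.log_exp 3
  have hlogc1 : Real.log (c + 1) ≤ c := by
    have := Real.log_le_sub_one_of_pos (by linarith : (0:ℝ) < c + 1)
    linarith
  have hlogc1' : 0 ≤ Real.log (c + 1) := Real.log_nonneg (by linarith)
  have hlogL : Real.log L ≤ L - 1 := Real.log_le_sub_one_of_pos hL0
  have key : (c + 1) * Real.log (c + 1) + c * Real.log (dhat / 2) + c
      < 10 * c * L := by
    rw [hlogdhat]
    nlinarith [mul_pos hc0 hL0, mul_le_mul_of_nonneg_left hlogL hc0.le,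
      mul_le_mul_of_nonneg_left (le_of_lt h20) hc0.le,
      mul_lt_mul_of_pos_left h20 hc0, mul_le_mul_of_nonneg_left hL1 hc0.le]
  refine ⟨⟨hEq, key⟩, ?_⟩
  intro d hd4 hroot
  by_contra hcon
  push_neg at hcon
  have hdpos' : 0 < d := lt_of_lt_of_le hdpos hcon
  have hlogd : Real.log (d / 2) = Real.log (dhat / 2) + Real.log (d / dhat) := by
    rw [Real.log_div hdpos'.ne' (by norm_num), Real.log_div hdpos.ne' (by norm_num),
      Real.log_div hdpos'.ne' hdpos.ne']
    ring
  have hld : Real.log (d / dhat) ≤ d / dhat - 1 :=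
    Real.log_le_sub_one_of_pos (div_pos hdpos' hdpos)
  have h40 : c * dhat = 40 * L := by
    rw [hd]; field_simp
  have hdd : c * (d / dhat - 1) = c * (d - dhat) / dhat := by
    field_simp
  have hbound : c * (d / dhat - 1) ≤ c ^ 2 * (d - dhat) / 4 := by
    rw [hdd, div_le_div_iff₀ hdpos (by norm_num : (0:ℝ) < 4)]
    have hnn : 0 ≤ c * (d - dhat) := mul_nonneg hc0.le (by linarith)
    nlinarith
  have hcl : c * Real.log (d / dhat) ≤ c * (d / dhat - 1) :=
    mul_le_mul_of_nonneg_left hld hc0.le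
  rw [hlogd] at hroot
  nlinarith [key, hEq, hbound, hcl]
end

section
/- For every positive real c and sufficiently large n, the size-Ramsey number R̂(C_{≤cn}, P_n) satisfies R̂(C_{≤cn}, P_n) ≥ 2.00365·n. -/
open SimpleGraph Finset Real

/-!
Let `B` be the set of vertices of degree at least `10` and `A` a maximal set of vertices of degree
between `1` and `9` that is independent in `G²`. The edges at `A` form a star forest; extend it to
a spanning forest `F` of the graph of edges that meet `A` or avoid `B`, and colour `F` red. There is
no red cycle, so there is a blue path `P` on `n` vertices, and `P` avoids `A`.

* The vertices of `P` outside `B` lie in at most `|B ∩ P| + 1` components of `F`, and every vertex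
  of `A` shares its component with a vertex outside `A`; since `|V| ≤ e(F) + #components`, this
  gives `n + |A| ≤ e(F) + 2|B| + 1`.
* A vertex of `B` meets at most one red edge and two edges of `P`, so at least
  `(∑_{v ∈ B} deg v - 3|B|) / 2` edges lie neither in `F` nor in `P`.
* By maximality of `A`, every vertex of `P` outside `B` is within distance `2` of `A`, whence
  `n ≤ |B| + 90 |A| + ∑_{v ∈ B} deg v`.

Combining these with `∑_{v ∈ B} deg v ≥ 10 |B|` yields `90 e(G) ≥ 181 n - 180`.
-/

theorem Finset.exists_maximal_pairwise_subset {α : Type*} [DecidableEq α] (r : α → α → Prop)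
    [Std.Symm r] (s : Finset α) :
    ∃ A ⊆ s, (A : Set α).Pairwise r ∧ ∀ w ∈ s, w ∉ A → ∃ a ∈ A, ¬ r w a := by
  classical
  obtain ⟨A, hA, hmax⟩ :=
    (s.powerset.filter fun A : Finset α => (A : Set α).Pairwise r).exists_max_image card
      ⟨∅, by simp⟩
  rw [mem_filter, mem_powerset] at hA
  refine ⟨A, hA.1, hA.2, fun w hw hwA => ?_⟩
  by_contra! h
  have := hmax (insert w A) (by
    simp only [mem_filter, mem_powerset, insert_subset_iff, coe_insert, Set.pairwise_insert_of_symm]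
    exact ⟨⟨hw, hA.1⟩, hA.2, fun b hb _ => h b hb⟩)
  rw [card_insert_of_notMem hwA] at this
  omega

namespace SimpleGraph

variable {V : Type*} {G : SimpleGraph V}

theorem Reachable.exists_adj_dist_lt {v r : V} (h : G.Reachable v r) (hne : v ≠ r) :
    ∃ w, G.Adj v w ∧ G.dist w r < G.dist v r := by
  obtain ⟨p, hp⟩ := h.exists_walk_length_eq_dist
  cases p with
  | nil => exact absurd rfl hne
  | cons hadj q =>
    refine ⟨_, hadj, (dist_le q).trans_lt ?_⟩
    rw [← hp, Walk.length_cons]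
    omega

theorem card_le_card_edgeFinset_add_card_connectedComponent [Fintype V] [Fintype G.edgeSet]
    [Fintype G.ConnectedComponent] :
    Fintype.card V ≤ #G.edgeFinset + Fintype.card G.ConnectedComponent := by
  classical
  set root : V → V := fun v => (G.connectedComponentMk v).out
  have hroot (v : V) : G.Reachable v (root v) :=
    ConnectedComponent.exact (Quot.out_eq (G.connectedComponentMk v)).symm
  have hroot_adj {v w : V} (h : G.Adj v w) : root w = root v := by
    simp only [root, ConnectedComponent.eq.2 h.reachable]
  choose! next hnext using fun v (h : v ≠ root v) => (hroot v).exists_adj_dist_lt h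
  -- `next v` is one step closer to the root, so no edge arises from both of its ends
  have hedges : #(univ.filter fun v => v ≠ root v) ≤ #G.edgeFinset := by
    refine card_le_card_of_injOn (fun v => s(v, next v)) (fun v hv => ?_) fun v hv w hw hvw => ?_
    · simpa using (hnext v (mem_filter.1 hv).2).1
    · simp only [coe_filter, mem_univ, true_and, Set.mem_ofPred_eq] at hv hw
      rcases Sym2.eq_iff.1 hvw with ⟨h, -⟩ | ⟨hv', hw'⟩
      · exact h
      · have h₁ := hnext _ hv
        have h₂ := hnext _ hw
        rw [hw'] at h₁
        rw [← hv', hroot_adj h₁.1] at h₂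
        omega
  have hroots : #(univ.filter fun v => ¬ v ≠ root v) ≤ Fintype.card G.ConnectedComponent := by
    refine (card_le_card fun v hv => ?_).trans
      (card_image_le (s := (univ : Finset G.ConnectedComponent)) (f := Quot.out))
    rw [mem_filter, not_not] at hv
    exact mem_image.2 ⟨_, mem_univ _, hv.2.symm⟩
  rw [← card_univ, ← card_filter_add_card_filter_not fun v => v ≠ root v]
  omega

theorem degree_le_add_of_le_sup [Fintype V] [DecidableEq V] {G₁ G₂ : SimpleGraph V}
    [DecidableRel G.Adj] [DecidableRel G₁.Adj] [DecidableRel G₂.Adj] (h : G ≤ G₁ ⊔ G₂) (v : V) :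
    G.degree v ≤ G₁.degree v + G₂.degree v := by
  simp only [← card_neighborFinset_eq_degree]
  exact (card_le_card fun w hw => by simpa using h ((mem_neighborFinset ..).1 hw)).trans
    (card_union_le _ _)

theorem card_edgeFinset_sup_of_disjoint [DecidableEq V] {G₁ G₂ : SimpleGraph V}
    [Fintype G₁.edgeSet] [Fintype G₂.edgeSet] [Fintype (G₁ ⊔ G₂).edgeSet] (h : Disjoint G₁ G₂) :
    #(G₁ ⊔ G₂).edgeFinset = #G₁.edgeFinset + #G₂.edgeFinset := by
  rw [edgeFinset_sup, card_union_of_disjoint (disjoint_edgeFinset.2 h)]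

theorem sum_degree_add_two_mul_card_edgeFinset_le [Fintype V] {H : SimpleGraph V}
    [DecidableRel G.Adj] [DecidableRel H.Adj] [Fintype G.edgeSet] [Fintype H.edgeSet]
    (hHG : H ≤ G) (B : Finset V) :
    ∑ v ∈ B, G.degree v + 2 * #H.edgeFinset ≤ ∑ v ∈ B, H.degree v + 2 * #G.edgeFinset := by
  classical
  -- naming `G \ H` makes all its edge finsets use one `Fintype` instance
  obtain ⟨K, hK⟩ : ∃ K, K = G \ H := ⟨_, rfl⟩
  have hcard : #K.edgeFinset = #G.edgeFinset - #H.edgeFinset := by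
    rw [← card_sdiff_of_subset (edgeFinset_mono hHG)]
    congr 1
    ext
    simp [hK]
  have hdeg : ∑ v ∈ B, G.degree v ≤ ∑ v ∈ B, H.degree v + ∑ v, K.degree v :=
    calc ∑ v ∈ B, G.degree v ≤ ∑ v ∈ B, (H.degree v + K.degree v) :=
          sum_le_sum fun v _ => degree_le_add_of_le_sup (hK ▸ le_sup_sdiff) v
      _ ≤ ∑ v ∈ B, H.degree v + ∑ v, K.degree v := by
          rw [sum_add_distrib]
          gcongr
          exact subset_univ B
  rw [sum_degrees_eq_twice_card_edges, hcard] at hdeg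
  have := card_le_card (edgeFinset_mono hHG)
  omega

theorem isAcyclic_of_forall_adj_mem_iff_notMem {S : SimpleGraph V} {A : Set V}
    (hA : ∀ ⦃x y⦄, S.Adj x y → (x ∈ A ↔ y ∉ A))
    (hA' : ∀ ⦃w a b⦄, S.Adj w a → S.Adj w b → a ∈ A → b ∈ A → a = b) : S.IsAcyclic := by
  intro u c hc
  obtain ⟨w, hw, hwA⟩ : ∃ w ∈ c.support, w ∉ A := by
    by_cases hu : u ∈ A
    · exact ⟨c.snd, c.getVert_mem_support 1, (hA (c.adj_snd hc.not_nil)).1 hu⟩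
    · exact ⟨u, c.start_mem_support, hu⟩
  obtain ⟨y, z, hyz, hN⟩ := Set.ncard_eq_two.1 (hc.ncard_neighborSet_toSubgraph_eq_two hw)
  have hy : S.Adj w y := c.toSubgraph.adj_sub (show y ∈ c.toSubgraph.neighborSet w by simp [hN])
  have hz : S.Adj w z := c.toSubgraph.adj_sub (show z ∈ c.toSubgraph.neighborSet w by simp [hN])
  exact hyz (hA' hy hz (not_not.1 (mt (hA hy).2 hwA)) (not_not.1 (mt (hA hz).2 hwA)))

theorem Walk.card_image_filter_support_le {α : Type*} [DecidableEq V] [DecidableEq α]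
    (B : Finset V) (f : V → α) (hf : ∀ ⦃a b⦄, G.Adj a b → a ∉ B → b ∉ B → f a = f b)
    {u v : V} (p : G.Walk u v) :
    #((p.support.toFinset.filter (· ∉ B)).image f) ≤ p.support.countP (· ∈ B) + 1 := by
  suffices ∀ {u v : V} (p : G.Walk u v),
      #((p.support.toFinset.filter (· ∉ B)).image f) + (if u ∈ B then 1 else 0) ≤
        p.support.countP (· ∈ B) + 1 from (Nat.le_add_right _ _).trans (this p)
  intro u v p
  induction p with
  | @nil w => by_cases hw : w ∈ B <;> simp [hw, filter_singleton]
  | @cons a b c hab q ih =>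
    rw [Walk.support_cons, List.toFinset_cons, filter_insert, List.countP_cons]
    by_cases ha : a ∈ B
    · simp only [ha, not_true_eq_false, if_false, decide_true, if_true]
      split at ih <;> omega
    · simp only [ha, not_false_eq_true, if_true, decide_false, if_false, image_insert]
      by_cases hb : b ∈ B
      · simp only [hb, if_true] at ih
        exact (card_insert_le _ _).trans (by omega)
      · rw [hf hab ha hb, insert_eq_of_mem (mem_image_of_mem f (by simpa using hb))]
        simpa [hb] using ih

theorem Walk.exists_mem_edges_of_mem_support {u v w : V} {p : G.Walk u v} (hnil : ¬ p.Nil)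
    (hw : w ∈ p.support) : ∃ y, s(w, y) ∈ p.edges := by
  obtain ⟨e, he, hwe⟩ := (Walk.mem_support_iff_exists_mem_edges_of_not_nil hnil).1 hw
  obtain ⟨y, rfl⟩ := Sym2.mem_iff_exists.1 hwe
  exact ⟨y, he⟩

theorem Walk.IsPath.ncard_neighborSet_toSubgraph_le_two {u v : V} {p : G.Walk u v}
    (hp : p.IsPath) (w : V) : (p.toSubgraph.neighborSet w).ncard ≤ 2 := by
  by_cases hw : w ∈ p.support ∧ ¬ p.Nil
  · obtain ⟨⟨i, rfl, hi⟩, hnil⟩ := And.imp_left Walk.mem_support_iff_exists_getVert.1 hw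
    rcases Nat.eq_zero_or_pos i with rfl | hi₀
    · simp [hp.neighborSet_toSubgraph_startpoint hnil]
    rcases hi.eq_or_lt with rfl | hi'
    · simp [hp.neighborSet_toSubgraph_endpoint hnil]
    · exact (hp.ncard_neighborSet_toSubgraph_internal_eq_two hi₀.ne' hi').le
  · suffices p.toSubgraph.neighborSet w = ∅ by simp [this]
    refine Set.eq_empty_of_forall_notMem fun y hy => hw ⟨?_, fun hnil => ?_⟩
    · exact p.mem_verts_toSubgraph.1 hy.fst_mem
    · simpa [Walk.edges_eq_nil.2 hnil] using Walk.adj_toSubgraph_iff_mem_edges.1 hy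

theorem Walk.IsPath.degree_toSubgraph_spanningCoe_le_two {u v : V} {p : G.Walk u v}
    (hp : p.IsPath) (w : V) [Fintype (p.toSubgraph.spanningCoe.neighborSet w)] :
    p.toSubgraph.spanningCoe.degree w ≤ 2 := by
  rw [← card_neighborSet_eq_degree, ← Nat.card_eq_fintype_card, Nat.card_coe_set_eq]
  exact hp.ncard_neighborSet_toSubgraph_le_two w

theorem Walk.IsTrail.card_edgeFinset_toSubgraph_spanningCoe [DecidableEq V] {u v : V}
    {p : G.Walk u v} (hp : p.IsTrail) [Fintype p.toSubgraph.spanningCoe.edgeSet] :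
    #p.toSubgraph.spanningCoe.edgeFinset = p.length := by
  rw [← p.length_edges, ← List.toFinset_card_of_nodup hp.edges_nodup]
  congr 1
  ext e
  simp

theorem Walk.IsPath.length_add_card_le [Fintype V] [DecidableEq V] {F : SimpleGraph V}
    [DecidableRel F.Adj] {A B : Finset V} (hAF : ∀ a ∈ A, ∃ w ∉ A, F.Adj a w)
    (hBF : ∀ ⦃x y⦄, G.Adj x y → x ∉ B → y ∉ B → F.Reachable x y)
    {u v : V} {p : G.Walk u v} (hp : p.IsPath) (hpA : ∀ a ∈ A, a ∉ p.support) :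
    p.length + #A ≤ #F.edgeFinset + 2 * #(p.support.toFinset.filter (· ∈ B)) := by
  classical
  set S := p.support.toFinset
  set P' := S.filter (· ∉ B)
  set mk := F.connectedComponentMk
  have hS : #S = p.length + 1 := by
    rw [List.toFinset_card_of_nodup hp.support_nodup, Walk.length_support]
  have hsplit : #(S.filter (· ∈ B)) + #P' = #S := card_filter_add_card_filter_not _
  have hseg : #(P'.image mk) ≤ #(S.filter (· ∈ B)) + 1 := by
    have := p.card_image_filter_support_le B mk fun a b h ha hb =>
      ConnectedComponent.eq.2 (hBF h ha hb)
    rw [List.countP_eq_length_filter, ← List.toFinset_card_of_nodup (hp.support_nodup.filter _),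
      List.toFinset_filter] at this
    simpa using this
  have hdisj : Disjoint P' A := Finset.disjoint_left.2 fun _ ha haA =>
    hpA _ haA (List.mem_toFinset.1 (mem_filter.1 ha).1)
  have hcomp : (univ : Finset F.ConnectedComponent) ⊆
      P'.image mk ∪ (univ \ (P' ∪ A)).image mk := by
    intro c _
    induction c using ConnectedComponent.ind with | h x => ?_
    simp only [mem_union, mem_image, mem_sdiff, mem_univ, true_and]
    by_cases hx : x ∈ P'
    · exact Or.inl ⟨x, hx, rfl⟩
    by_cases hxA : x ∈ A
    · obtain ⟨w, hwA, hxw⟩ := hAF x hxA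
      have hmk : mk w = mk x := ConnectedComponent.eq.2 hxw.symm.reachable
      by_cases hw : w ∈ P'
      · exact Or.inl ⟨w, hw, hmk⟩
      · exact Or.inr ⟨w, by simp [hw, hwA], hmk⟩
    · exact Or.inr ⟨x, by simp [hx, hxA], rfl⟩
  have := card_le_card hcomp
  have := card_union_le (P'.image mk) ((univ \ (P' ∪ A)).image mk)
  have := card_image_le (s := univ \ (P' ∪ A)) (f := mk)
  rw [card_univ_sdiff, card_union_of_disjoint hdisj] at this
  have := card_le_univ (P' ∪ A)
  rw [card_union_of_disjoint hdisj] at this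
  have := card_le_card_edgeFinset_add_card_connectedComponent (G := F)
  rw [card_univ] at *
  omega

/-- Distinct vertices of `A` are at distance at least `3`, i.e. `A` is independent in `G²`. -/
def IsTwoPacking (G : SimpleGraph V) (A : Set V) : Prop :=
  A.Pairwise fun a b => ¬ G.Adj a b ∧ Disjoint (G.neighborSet a) (G.neighborSet b)

namespace IsTwoPacking

variable {A : Set V}

theorem not_adj (hA : G.IsTwoPacking A) {a b : V} (ha : a ∈ A) (hb : b ∈ A) : ¬ G.Adj a b :=
  fun h => (hA ha hb h.ne).1 h

theorem eq_of_adj_of_adj (hA : G.IsTwoPacking A) {w a b : V} (ha : a ∈ A) (hb : b ∈ A)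
    (hwa : G.Adj w a) (hwb : G.Adj w b) : a = b := by
  by_contra hab
  exact Set.disjoint_left.1 (hA ha hb hab).2 hwa.symm hwb.symm

theorem isAcyclic_inf_fromRel (hA : G.IsTwoPacking A) :
    (G ⊓ fromRel fun x _ => x ∈ A).IsAcyclic := by
  refine isAcyclic_of_forall_adj_mem_iff_notMem (A := A) (fun x y h => ?_)
    fun w a b ha hb haA hbA => hA.eq_of_adj_of_adj haA hbA ha.1 hb.1
  simp only [inf_adj, fromRel_adj] at h
  have := hA.not_adj (a := x) (b := y)
  tauto

theorem degree_le_one [Fintype V] (hA : G.IsTwoPacking A) {F : SimpleGraph V}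
    [DecidableRel F.Adj] {v : V} (h : ∀ w, F.Adj v w → G.Adj v w ∧ w ∈ A) : F.degree v ≤ 1 := by
  rw [← card_neighborFinset_eq_degree, card_le_one]
  intro a ha b hb
  simp only [mem_neighborFinset] at ha hb
  exact hA.eq_of_adj_of_adj (h a ha).2 (h b hb).2 (h a ha).1 (h b hb).1

theorem exists_isAcyclic (hA : G.IsTwoPacking A) {B : Set V} (hAB : Disjoint A B) :
    ∃ F ≤ G, F.IsAcyclic ∧ (∀ a ∈ A, ∀ w, G.Adj a w → F.Adj a w) ∧
      (∀ v ∈ B, ∀ w, F.Adj v w → G.Adj v w ∧ w ∈ A) ∧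
      ∀ ⦃x y⦄, G.Adj x y → x ∉ B → y ∉ B → F.Reachable x y := by
  obtain ⟨F, hSF, hFH, hF, hreach⟩ := exists_isAcyclic_reachable_eq_le_of_le_of_isAcyclic
    (G := G ⊓ fromRel fun x y => x ∈ A ∨ x ∉ B ∧ y ∉ B)
    (fun x y h => by simp only [inf_adj, fromRel_adj] at h ⊢; tauto) hA.isAcyclic_inf_fromRel
  refine ⟨F, hFH.trans inf_le_left, hF, fun a ha w h => hSF ⟨h, h.ne, Or.inl ha⟩,
    fun v hv w h => ?_, fun x y h hx hy => ?_⟩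
  · have hvA := Set.disjoint_right.1 hAB hv
    have hvw := hFH h
    simp only [inf_adj, fromRel_adj] at hvw
    tauto
  · rw [hreach]
    exact Adj.reachable ⟨h, h.ne, Or.inl (Or.inr ⟨hx, hy⟩)⟩

end IsTwoPacking

section Neighborhood

variable [Fintype V] [DecidableEq V]

def neighborhood (G : SimpleGraph V) [DecidableRel G.Adj] (s : Finset V) : Finset V :=
  s.biUnion fun v => G.neighborFinset v

variable [DecidableRel G.Adj]

theorem mem_neighborhood {s : Finset V} {w : V} : w ∈ G.neighborhood s ↔ ∃ v ∈ s, G.Adj v w := by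
  simp [neighborhood]

theorem card_neighborhood_le (s : Finset V) : #(G.neighborhood s) ≤ ∑ v ∈ s, G.degree v :=
  card_biUnion_le.trans (by simp [card_neighborFinset_eq_degree])

theorem card_le_of_subset_neighborhood {d : ℕ} {A B X : Finset V}
    (hd : ∀ v ∉ B, G.degree v ≤ d)
    (hX : X ⊆ B ∪ (G.neighborhood A ∪ G.neighborhood (G.neighborhood A))) :
    #X ≤ #B + (d + 1) * ∑ a ∈ A, G.degree a + ∑ v ∈ B, G.degree v := by
  set N := G.neighborhood A
  have hNN : ∑ v ∈ N, G.degree v ≤ d * #N + ∑ v ∈ B, G.degree v := by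
    rw [← sum_filter_not_add_sum_filter N (· ∈ B) fun v => G.degree v]
    gcongr ?_ + ?_
    · exact (sum_le_card_nsmul _ _ d fun v hv => hd v (mem_filter.1 hv).2).trans
        (by simpa [mul_comm] using Nat.mul_le_mul_left d (card_filter_le N fun v => v ∉ B))
    · exact sum_le_sum_of_subset fun v hv => (mem_filter.1 hv).2
  have hNA := card_neighborhood_le (G := G) A
  calc #X ≤ #B + (#N + #(G.neighborhood N)) :=
        (card_le_card hX).trans ((card_union_le _ _).trans (by gcongr; exact card_union_le _ _))
    _ ≤ #B + (∑ a ∈ A, G.degree a + (d * ∑ a ∈ A, G.degree a + ∑ v ∈ B, G.degree v)) := by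
        gcongr
        exact (card_neighborhood_le N).trans (hNN.trans (by gcongr))
    _ = #B + (d + 1) * ∑ a ∈ A, G.degree a + ∑ v ∈ B, G.degree v := by ring

theorem exists_isTwoPacking_subset (s : Finset V) (hs : ∀ w ∈ s, 0 < G.degree w) :
    ∃ A ⊆ s, G.IsTwoPacking A ∧ s ⊆ G.neighborhood A ∪ G.neighborhood (G.neighborhood A) := by
  let r a b := ¬ G.Adj a b ∧ Disjoint (G.neighborSet a) (G.neighborSet b)
  have : Std.Symm r := ⟨fun _ _ h => ⟨fun h' => h.1 h'.symm, h.2.symm⟩⟩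
  obtain ⟨A, hAs, hA, hmax⟩ := s.exists_maximal_pairwise_subset r
  refine ⟨A, hAs, hA, fun w hw => ?_⟩
  simp only [mem_union, mem_neighborhood]
  by_cases hwA : w ∈ A
  · obtain ⟨u, hu⟩ := (G.degree_pos_iff_exists_adj w).1 (hs w hw)
    exact Or.inr ⟨u, ⟨w, hwA, hu⟩, hu.symm⟩
  obtain ⟨a, haA, ha⟩ := hmax w hw hwA
  by_cases hwa : G.Adj w a
  · exact Or.inl ⟨a, haA, hwa.symm⟩
  · obtain ⟨u, hwu, hau⟩ := Set.not_disjoint_iff.1 fun h => ha ⟨hwa, h⟩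
    exact Or.inr ⟨u, ⟨a, haA, hau⟩, G.adj_symm hwu⟩

end Neighborhood

theorem Walk.IsPath.sum_degree_add_two_mul_le [Fintype V] [DecidableEq V] [DecidableRel G.Adj]
    {F : SimpleGraph V} [DecidableRel F.Adj] (hFG : F ≤ G) {u v : V} {p : G.Walk u v}
    (hp : p.IsPath) (hpF : ∀ e ∈ p.edges, e ∉ F.edgeSet) (B : Finset V)
    (hB : ∀ v ∈ B, F.degree v ≤ 1) :
    ∑ v ∈ B, G.degree v + 2 * (#F.edgeFinset + p.length) ≤ 3 * #B + 2 * #G.edgeFinset := by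
  classical
  have hdisj : Disjoint F p.toSubgraph.spanningCoe := by
    rw [← disjoint_edgeSet, Set.disjoint_left]
    intro e heF heP
    exact hpF e (by simpa using heP) heF
  have h := sum_degree_add_two_mul_card_edgeFinset_le (sup_le hFG p.toSubgraph.spanningCoe_le) B
  rw [card_edgeFinset_sup_of_disjoint hdisj, hp.isTrail.card_edgeFinset_toSubgraph_spanningCoe] at h
  have hdeg : ∑ v ∈ B, (F ⊔ p.toSubgraph.spanningCoe).degree v ≤ 3 * #B := by
    rw [mul_comm, ← smul_eq_mul, ← sum_const]
    refine sum_le_sum fun v hv => (degree_le_add_of_le_sup le_rfl v).trans ?_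
    have := hp.degree_toSubgraph_spanningCoe_le_two v
    have := hB v hv
    omega
  omega

theorem exists_isAcyclic_forall_isPath_length_le [Fintype V] [DecidableEq V] (G : SimpleGraph V)
    [DecidableRel G.Adj] :
    ∃ F ≤ G, F.IsAcyclic ∧ ∀ ⦃u v : V⦄ (p : G.Walk u v), p.IsPath → ¬ p.Nil →
      (∀ e ∈ p.edges, e ∉ F.edgeSet) → 181 * p.length + 1 ≤ 90 * #G.edgeFinset := by
  classical
  set B := univ.filter fun v => 10 ≤ G.degree v
  obtain ⟨A, hAs, hA, hcover⟩ := G.exists_isTwoPacking_subset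
    (univ.filter fun v => 0 < G.degree v ∧ v ∉ B) fun w hw => (mem_filter.1 hw).2.1
  have hAB : ∀ a ∈ A, a ∉ B := fun a ha => (mem_filter.1 (hAs ha)).2.2
  obtain ⟨F, hFG, hF, hstar, hFB, hBF⟩ :=
    hA.exists_isAcyclic (B := B) (Set.disjoint_left.2 fun a ha => hAB a ha)
  refine ⟨F, hFG, hF, fun u v p hp hnil hpF => ?_⟩
  have hpA : ∀ a ∈ A, a ∉ p.support := fun a ha hap => by
    obtain ⟨w, hw⟩ := p.exists_mem_edges_of_mem_support hnil hap
    exact hpF _ hw (hstar a ha w (p.adj_of_mem_edges hw))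
  have hAF : ∀ a ∈ A, ∃ w ∉ A, F.Adj a w := fun a ha => by
    obtain ⟨w, hw⟩ := (G.degree_pos_iff_exists_adj a).1 (mem_filter.1 (hAs ha)).2.1
    exact ⟨w, fun hwA => hA.not_adj ha hwA hw, hstar a ha w hw⟩
  have hsupp : p.support.toFinset ⊆
      B ∪ (G.neighborhood A ∪ G.neighborhood (G.neighborhood A)) := by
    intro w hw
    rw [List.mem_toFinset] at hw
    by_cases hwB : w ∈ B
    · exact mem_union_left _ hwB
    obtain ⟨y, hy⟩ := p.exists_mem_edges_of_mem_support hnil hw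
    exact mem_union_right _ (hcover (mem_filter.2 ⟨mem_univ w,
      (G.degree_pos_iff_exists_adj w).2 ⟨y, p.adj_of_mem_edges hy⟩, hwB⟩))
  have h₁ := hp.sum_degree_add_two_mul_le hFG hpF B fun v hv => hA.degree_le_one (hFB v hv)
  have h₂ := hp.length_add_card_le hAF hBF hpA
  have h₃ := card_le_of_subset_neighborhood (d := 9)
    (fun v hv => Nat.le_of_lt_succ (by simpa [B] using hv)) hsupp
  have h₄ : ∑ a ∈ A, G.degree a ≤ 9 * #A := by
    simpa [mul_comm] using sum_le_card_nsmul A _ 9 fun a ha =>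
      Nat.le_of_lt_succ (by simpa [B] using hAB a ha)
  have h₅ : 10 * #B ≤ ∑ v ∈ B, G.degree v := by
    simpa [mul_comm] using card_nsmul_le_sum B _ 10 fun v hv => (mem_filter.1 hv).2
  have h₆ : #(p.support.toFinset.filter (· ∈ B)) ≤ #B :=
    card_le_card fun w hw => (mem_filter.1 hw).2
  have h₇ : #p.support.toFinset = p.length + 1 := by
    rw [List.toFinset_card_of_nodup hp.support_nodup, Walk.length_support]
  omega

end SimpleGraph

theorem not_hasRedCycleLe_of_isAcyclic {V : Type*} {G F : SimpleGraph V} (hF : F.IsAcyclic)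
    [DecidablePred (· ∈ F.edgeSet)] (L : ℝ) :
    ¬ hasRedCycleLe G (fun e => decide (e ∈ F.edgeSet)) L := by
  rintro ⟨u, c, hc, -, hred⟩
  exact hF _ (hc.transfer fun e he => by simpa using hred e he)

theorem stmt18_general (c : ℝ) :
    ∃ n₀ : ℕ, ∀ n : ℕ, n₀ ≤ n →
      ∀ (V : Type) [Fintype V] [DecidableEq V] (G : SimpleGraph V) [DecidableRel G.Adj],
        (∀ red : Sym2 V → Bool, hasRedCycleLe G red (c * n) ∨ hasBluePath G red n) →
        (2.00365 : ℝ) * n ≤ G.edgeFinset.card := by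
  classical
  refine ⟨300, fun n hn V _ _ G _ harrow => ?_⟩
  obtain ⟨F, -, hF, hpath⟩ := G.exists_isAcyclic_forall_isPath_length_le
  obtain ⟨u, v, p, hp, hlen, hblue⟩ :=
    (harrow fun e => decide (e ∈ F.edgeSet)).resolve_left (not_hasRedCycleLe_of_isAcyclic hF _)
  have hbound := hpath p hp (by rw [← Walk.length_eq_zero_iff]; omega) (by simpa using hblue)
  have hn' : (300 : ℝ) ≤ n := by exact_mod_cast hn
  have hbound' : (181 * p.length + 1 : ℝ) ≤ 90 * #G.edgeFinset := by exact_mod_cast hbound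
  rw [← hlen] at hn' ⊢
  push_cast at hn' ⊢
  linarith

theorem stmt18 (c : ℝ) (hc : 0 < c) :
    ∃ n₀ : ℕ, ∀ n : ℕ, n₀ ≤ n →
      ∀ (V : Type) [Fintype V] [DecidableEq V] (G : SimpleGraph V) [DecidableRel G.Adj],
        (∀ red : Sym2 V → Bool, hasRedCycleLe G red (c * n) ∨ hasBluePath G red n) →
        (2.00365 : ℝ) * n ≤ G.edgeFinset.card :=
  stmt18_general c
end
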